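/- arXiv:2208.13384 — 7 statements merged into one kernel-verified Lean document; each statement's English description precedes it below -/
import Mathlib

section
/- Fix n, p : ℕ, k : Fin n, m : Fin p, parameters a : Fin n → ℝ, b : Fin p → ℝ, W : Fin n → Fin p → ℝ. Let S := Fin n ⊕ Fin p, let matrices be indexed by configurations f : S → Fin 2 with complex entries, and define ζ s f := (1 : ℝ) if f s = 0 and (−1) otherwise; σz(s) := Matrix.diagonal (fun f => (ζ s f : ℂ)); E f := (∑ i, a i · ζ (Sum.inl i) f) + (∑ j, b j · ζ (Sum.inr j) f) + ∑ i, ∑ j, W i j · ζ (Sum.inl i) f · ζ (Sum.inr j) f; H := Matrix.diagonal (fun f => (E f : ℂ)); ρ := (trace (Matrix.exp (−H)))⁻¹ • Matrix.exp (−H). Let P, Q be matrices with P·P = 1, Q·Q = 1, P·Q = Q·P, P·σz(Sum.inl k) = −(σz(Sum.inl k)·P), Q·σz(Sum.inr m) = −(σz(Sum.inr m)·Q), P·σz(s) = σz(s)·P for all s ≠ Sum.inl k, and Q·σz(s) = σz(s)·Q for all s ≠ Sum.inr m. Then for every t ∈ ℝ, with Q(t) := Matrix.exp((Complex.I·t)•H)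 · Q · Matrix.exp((−(Complex.I·t))•H), one has trace(ρ · P · Q(t) · P · Q(t)) = (Real.cos (4·W k m·t) : ℂ) − Complex.I · trace(ρ · σz(Sum.inl k) · σz(Sum.inr m)) · (Real.sin (4·W k m·t) : ℂ). -/
open Matrix NormedSpace

noncomputable section

variable {n p : ℕ}

/-- Spin value (±1) of site `s` in configuration `f`. -/
def zeta (s : Fin n ⊕ Fin p) (f : (Fin n ⊕ Fin p) → Fin 2) : ℝ :=
  if f s = 0 then 1 else -1

/-- The Pauli-z operator at site `s`, diagonal in the configuration basis. -/
def sigmaZ (s : Fin n ⊕ Fin p) :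
    Matrix ((Fin n ⊕ Fin p) → Fin 2) ((Fin n ⊕ Fin p) → Fin 2) ℂ :=
  Matrix.diagonal fun f => (zeta s f : ℂ)

/-- The classical Ising energy of the RBM (Eq. 2 of the paper). -/
def energy (a : Fin n → ℝ) (b : Fin p → ℝ) (W : Fin n → Fin p → ℝ)
    (f : (Fin n ⊕ Fin p) → Fin 2) : ℝ :=
  (∑ i, a i * zeta (Sum.inl i) f) + (∑ j, b j * zeta (Sum.inr j) f) +
    ∑ i, ∑ j, W i j * zeta (Sum.inl i) f * zeta (Sum.inr j) f

/-- The RBM Hamiltonian, diagonal in the configuration basis. -/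
def Hrbm (a : Fin n → ℝ) (b : Fin p → ℝ) (W : Fin n → Fin p → ℝ) :
    Matrix ((Fin n ⊕ Fin p) → Fin 2) ((Fin n ⊕ Fin p) → Fin 2) ℂ :=
  Matrix.diagonal fun f => (energy a b W f : ℂ)

/-- The thermal state `ρ = e^{-H} / tr(e^{-H})` (Eq. 3 of the paper). -/
def rhoTh (a : Fin n → ℝ) (b : Fin p → ℝ) (W : Fin n → Fin p → ℝ) :
    Matrix ((Fin n ⊕ Fin p) → Fin 2) ((Fin n ⊕ Fin p) → Fin 2) ℂ :=
  (Matrix.trace (NormedSpace.exp (-Hrbm a b W)))⁻¹ • NormedSpace.exp (-Hrbm a b W)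

/-!
Anticommuting with `σᶻ` at one site and commuting with it at all others forces the matrix entries
of `P` (resp. `Q`) to lie on the single spin flip at `v_k` (resp. `h_m`), so `P` moves diagonal
matrices across itself by relabelling configurations: `P * diagonal d = diagonal (d ∘ flip_k) * P`.
As `H` is diagonal, `Q(t) = D_t * Q` with `D_t f = exp (i t (E f - E (flip_m f)))`, and then
`P Q(t) P Q(t)` is the diagonal matrix `D_t (flip_k f) * D_t (flip_m f)`. Its phase is a mixed
second difference of the energy, which only sees the coupling `W k m` and equals
`-4 W k m σᶻ_k σᶻ_m`. Since `σᶻ_k σᶻ_m = ±1`, this gives the operator identity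
`P Q(t) P Q(t) = cos (4 W k m t) - i sin (4 W k m t) σᶻ_k σᶻ_m`, whose thermal expectation is the
claim.
-/

def flipAt (t : Fin n ⊕ Fin p) (f : (Fin n ⊕ Fin p) → Fin 2) : (Fin n ⊕ Fin p) → Fin 2 :=
  Function.update f t (f t + 1)

theorem flipAt_involutive (t : Fin n ⊕ Fin p) : Function.Involutive (flipAt t) := by
  intro f
  have h2 : f t + 1 + 1 = f t := by generalize f t = x; fin_cases x <;> rfl
  simp [flipAt, h2]

theorem zeta_eq_zeta_iff {s : Fin n ⊕ Fin p} {f g : (Fin n ⊕ Fin p) → Fin 2} :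
    zeta s f = zeta s g ↔ f s = g s := by
  unfold zeta
  generalize f s = x; generalize g s = y
  fin_cases x <;> fin_cases y <;> norm_num

theorem zeta_flipAt (s t : Fin n ⊕ Fin p) (f : (Fin n ⊕ Fin p) → Fin 2) :
    zeta s (flipAt t f) = if s = t then -zeta s f else zeta s f := by
  rcases eq_or_ne s t with rfl | h
  · simp only [zeta, flipAt, Function.update_self, if_true]
    generalize f s = x; fin_cases x <;> simp [show (1 : Fin 2) + 1 = 0 from rfl]
  · simp [zeta, flipAt, h]

theorem zeta_mul_zeta_eq_one_or (s s' : Fin n ⊕ Fin p) (f : (Fin n ⊕ Fin p) → Fin 2) :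
    zeta s f * zeta s' f = 1 ∨ zeta s f * zeta s' f = -1 := by
  unfold zeta; split_ifs <;> norm_num

theorem eq_flipAt_of_zeta {t : Fin n ⊕ Fin p} {f g : (Fin n ⊕ Fin p) → Fin 2}
    (h : ∀ s, zeta s g = if s = t then -zeta s f else zeta s f) : g = flipAt t f := by
  funext s
  rw [← zeta_eq_zeta_iff, h, zeta_flipAt]

theorem Finset.sum_ite_eq_neg {ι R : Type*} [Fintype ι] [DecidableEq ι] [Ring R]
    (g : ι → R) (k : ι) :
    ∑ i, (if i = k then -g i else g i) = ∑ i, g i - 2 * g k := by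
  have h : ∀ i, (if i = k then -g i else g i) = g i - if i = k then 2 * g i else 0 := by
    intro i; split_ifs <;> noncomm_ring
  simp only [h, Finset.sum_sub_distrib, Finset.sum_ite_eq', Finset.mem_univ, if_true]

theorem energy_sub_energy_flipAt_inr (a : Fin n → ℝ) (b : Fin p → ℝ) (W : Fin n → Fin p → ℝ)
    (m : Fin p) (f : (Fin n ⊕ Fin p) → Fin 2) :
    energy a b W f - energy a b W (flipAt (Sum.inr m) f) =
      2 * zeta (Sum.inr m) f * (b m + ∑ i, W i m * zeta (Sum.inl i) f) := by
  simp only [energy, zeta_flipAt, reduceCtorEq, if_false, Sum.inr.injEq, mul_ite, mul_neg,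
    Finset.sum_ite_eq_neg]
  rw [Finset.sum_sub_distrib, mul_add, Finset.mul_sum]
  ring_nf

theorem energy_mixed_flip_difference (a : Fin n → ℝ) (b : Fin p → ℝ) (W : Fin n → Fin p → ℝ)
    (k : Fin n) (m : Fin p) (f : (Fin n ⊕ Fin p) → Fin 2) :
    (energy a b W (flipAt (Sum.inl k) f) -
        energy a b W (flipAt (Sum.inr m) (flipAt (Sum.inl k) f))) -
      (energy a b W f - energy a b W (flipAt (Sum.inr m) f)) =
      -4 * W k m * (zeta (Sum.inl k) f * zeta (Sum.inr m) f) := by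
  simp only [energy_sub_energy_flipAt_inr, zeta_flipAt, reduceCtorEq, if_false, Sum.inl.injEq,
    mul_ite, mul_neg, Finset.sum_ite_eq_neg]
  ring

theorem Matrix.mul_diagonal_eq_diagonal_comp_mul {X R : Type*} [Fintype X] [DecidableEq X]
    [CommSemiring R] {A : Matrix X X R} {φ : X → X} (hA : ∀ x y, A x y ≠ 0 → y = φ x)
    (d : X → R) : A * diagonal d = diagonal (d ∘ φ) * A := by
  ext x y
  rw [mul_diagonal, diagonal_mul]
  rcases eq_or_ne (A x y) 0 with h | h
  · simp [h]
  · rw [hA x y h, mul_comm, Function.comp_apply]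

theorem eq_flipAt_of_apply_ne_zero
    {A : Matrix ((Fin n ⊕ Fin p) → Fin 2) ((Fin n ⊕ Fin p) → Fin 2) ℂ} {t : Fin n ⊕ Fin p}
    (hanti : A * sigmaZ t = -(sigmaZ t * A))
    (hcomm : ∀ s, s ≠ t → A * sigmaZ s = sigmaZ s * A) :
    ∀ f g, A f g ≠ 0 → g = flipAt t f := by
  intro f g hA
  refine eq_flipAt_of_zeta fun s => ?_
  have hentry : A f g * zeta s g = A f g * if s = t then -zeta s f else zeta s f := by
    split_ifs with hs
    · subst hs
      have := congrFun (congrFun hanti f) g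
      simp only [sigmaZ, mul_diagonal, Matrix.neg_apply, diagonal_mul] at this
      rw [this]; push_cast; ring
    · have := congrFun (congrFun (hcomm s hs) f) g
      simp only [sigmaZ, mul_diagonal, diagonal_mul] at this
      rw [this]; ring
  exact_mod_cast mul_left_cancel₀ hA hentry

theorem Matrix.mul_diagonal_mul_mul_diagonal_mul {X R : Type*} [Fintype X] [DecidableEq X]
    [CommSemiring R] {P Q : Matrix X X R} {φ ψ : X → X}
    (hP : ∀ d, P * diagonal d = diagonal (d ∘ φ) * P)
    (hQ : ∀ d, Q * diagonal d = diagonal (d ∘ ψ) * Q)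
    (hP2 : P * P = 1) (hQ2 : Q * Q = 1) (hPQ : P * Q = Q * P) (δ : X → R) :
    P * (diagonal δ * Q) * P * (diagonal δ * Q) = diagonal (fun x => δ (φ x) * δ (ψ x)) := by
  have hPQP : P * Q * P = Q := by rw [hPQ, mul_assoc, hP2, mul_one]
  calc P * (diagonal δ * Q) * P * (diagonal δ * Q)
      = diagonal (δ ∘ φ) * (P * Q * P) * diagonal δ * Q := by
        simp only [← mul_assoc, hP]
    _ = diagonal (δ ∘ φ) * diagonal (δ ∘ ψ) * (Q * Q) := by
        rw [hPQP, mul_assoc _ Q, hQ]; simp only [mul_assoc]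
    _ = diagonal (fun x => δ (φ x) * δ (ψ x)) := by
        rw [hQ2, mul_one, diagonal_mul_diagonal]; rfl

theorem exp_smul_Hrbm (a : Fin n → ℝ) (b : Fin p → ℝ) (W : Fin n → Fin p → ℝ) (z : ℂ) :
    exp (z • Hrbm a b W) = diagonal fun f => Complex.exp (z * energy a b W f) := by
  rw [Hrbm, ← diagonal_smul, exp_diagonal]
  ext f g
  simp [diagonal_apply, Complex.exp_eq_exp_ℂ]

theorem trace_rhoTh (a : Fin n → ℝ) (b : Fin p → ℝ) (W : Fin n → Fin p → ℝ) :
    trace (rhoTh a b W) = 1 := by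
  have hZ : trace (exp (-Hrbm a b W)) = ((∑ f, Real.exp (-energy a b W f) : ℝ) : ℂ) := by
    rw [← neg_one_smul ℂ (Hrbm a b W), exp_smul_Hrbm, trace_diagonal]
    push_cast
    simp
  have hZ0 : trace (exp (-Hrbm a b W)) ≠ 0 := by
    rw [hZ, Complex.ofReal_ne_zero]
    exact (Finset.sum_pos (fun f _ => Real.exp_pos _) Finset.univ_nonempty).ne'
  rw [rhoTh, trace_smul, smul_eq_mul, inv_mul_cancel₀ hZ0]

theorem Complex.exp_sign_mul_mul_I {s : ℝ} (hs : s = 1 ∨ s = -1) (x : ℝ) :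
    Complex.exp (s * x * I) = Real.cos x + s * Real.sin x * I := by
  rw [Complex.exp_mul_I, ← Complex.ofReal_mul, ← Complex.ofReal_cos, ← Complex.ofReal_sin]
  rcases hs with rfl | rfl <;> simp

def flipPhase (a : Fin n → ℝ) (b : Fin p → ℝ) (W : Fin n → Fin p → ℝ) (t : ℝ)
    (s : Fin n ⊕ Fin p) (f : (Fin n ⊕ Fin p) → Fin 2) : ℂ :=
  Complex.exp (Complex.I * t * (energy a b W f - energy a b W (flipAt s f)))

theorem exp_mul_mul_exp_Hrbm (a : Fin n → ℝ) (b : Fin p → ℝ) (W : Fin n → Fin p → ℝ)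
    {A : Matrix ((Fin n ⊕ Fin p) → Fin 2) ((Fin n ⊕ Fin p) → Fin 2) ℂ} {s : Fin n ⊕ Fin p}
    (hA : ∀ d, A * diagonal d = diagonal (d ∘ flipAt s) * A) (t : ℝ) :
    exp ((Complex.I * t) • Hrbm a b W) * A * exp ((-(Complex.I * t)) • Hrbm a b W) =
      diagonal (flipPhase a b W t s) * A := by
  rw [exp_smul_Hrbm, exp_smul_Hrbm, mul_assoc, hA, ← mul_assoc, diagonal_mul_diagonal]
  congr 2
  funext f
  rw [flipPhase, Function.comp_apply, ← Complex.exp_add]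
  ring_nf

theorem flipPhase_mul_flipPhase (a : Fin n → ℝ) (b : Fin p → ℝ) (W : Fin n → Fin p → ℝ)
    (k : Fin n) (m : Fin p) (t : ℝ) (f : (Fin n ⊕ Fin p) → Fin 2) :
    flipPhase a b W t (Sum.inr m) (flipAt (Sum.inl k) f) *
        flipPhase a b W t (Sum.inr m) (flipAt (Sum.inr m) f) =
      Real.cos (4 * W k m * t) -
        Complex.I * Real.sin (4 * W k m * t) * (zeta (Sum.inl k) f * zeta (Sum.inr m) f : ℝ) := by
  have hE := congrArg (fun r : ℝ => (r : ℂ)) (energy_mixed_flip_difference a b W k m f)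
  push_cast at hE
  have hexponent :
      Complex.I * t * (energy a b W (flipAt (Sum.inl k) f) -
          energy a b W (flipAt (Sum.inr m) (flipAt (Sum.inl k) f))) +
        Complex.I * t * (energy a b W (flipAt (Sum.inr m) f) - energy a b W f) =
      (zeta (Sum.inl k) f * zeta (Sum.inr m) f : ℝ) * (-(4 * W k m * t) : ℝ) * Complex.I := by
    push_cast
    linear_combination (Complex.I * t) * hE
  rw [flipPhase, flipPhase, flipAt_involutive (Sum.inr m) f, ← Complex.exp_add, hexponent,
    Complex.exp_sign_mul_mul_I (zeta_mul_zeta_eq_one_or _ _ f), Real.cos_neg, Real.sin_neg]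
  push_cast
  ring

theorem otoc_operator_eq (k : Fin n) (m : Fin p)
    (a : Fin n → ℝ) (b : Fin p → ℝ) (W : Fin n → Fin p → ℝ)
    {P Q : Matrix ((Fin n ⊕ Fin p) → Fin 2) ((Fin n ⊕ Fin p) → Fin 2) ℂ}
    (hP2 : P * P = 1) (hQ2 : Q * Q = 1) (hPQ : P * Q = Q * P)
    (hPanti : P * sigmaZ (Sum.inl k) = -(sigmaZ (Sum.inl k) * P))
    (hQanti : Q * sigmaZ (Sum.inr m) = -(sigmaZ (Sum.inr m) * Q))
    (hPcomm : ∀ s : Fin n ⊕ Fin p, s ≠ Sum.inl k → P * sigmaZ s = sigmaZ s * P)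
    (hQcomm : ∀ s : Fin n ⊕ Fin p, s ≠ Sum.inr m → Q * sigmaZ s = sigmaZ s * Q) (t : ℝ) :
    P * (exp ((Complex.I * t) • Hrbm a b W) * Q * exp ((-(Complex.I * t)) • Hrbm a b W)) * P *
        (exp ((Complex.I * t) • Hrbm a b W) * Q * exp ((-(Complex.I * t)) • Hrbm a b W)) =
      (Real.cos (4 * W k m * t) : ℂ) • 1 -
        (Complex.I * Real.sin (4 * W k m * t)) • (sigmaZ (Sum.inl k) * sigmaZ (Sum.inr m)) := by
  have hP := mul_diagonal_eq_diagonal_comp_mul (eq_flipAt_of_apply_ne_zero hPanti hPcomm)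
  have hQ := mul_diagonal_eq_diagonal_comp_mul (eq_flipAt_of_apply_ne_zero hQanti hQcomm)
  rw [exp_mul_mul_exp_Hrbm a b W hQ, mul_diagonal_mul_mul_diagonal_mul hP hQ hP2 hQ2 hPQ,
    sigmaZ, sigmaZ, diagonal_mul_diagonal, smul_one_eq_diagonal, ← diagonal_smul, diagonal_sub]
  congr 1
  funext f
  simp only [flipPhase_mul_flipPhase, Pi.smul_apply, smul_eq_mul]
  push_cast
  ring

/-- Eq. (8) / Corollary B.5: closed form of the OTOC
`C(t) = ⟨P Q(t) P Q(t)⟩ = cos(4W^k_m t) - i ⟨σᶻ(v_k)σᶻ(h_m)⟩ sin(4W^k_m t)`. -/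
theorem otoc_closed_form (k : Fin n) (m : Fin p)
    (a : Fin n → ℝ) (b : Fin p → ℝ) (W : Fin n → Fin p → ℝ)
    (P Q : Matrix ((Fin n ⊕ Fin p) → Fin 2) ((Fin n ⊕ Fin p) → Fin 2) ℂ)
    (hP2 : P * P = 1) (hQ2 : Q * Q = 1) (hPQ : P * Q = Q * P)
    (hPanti : P * sigmaZ (Sum.inl k) = -(sigmaZ (Sum.inl k) * P))
    (hQanti : Q * sigmaZ (Sum.inr m) = -(sigmaZ (Sum.inr m) * Q))
    (hPcomm : ∀ s : Fin n ⊕ Fin p, s ≠ Sum.inl k → P * sigmaZ s = sigmaZ s * P)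
    (hQcomm : ∀ s : Fin n ⊕ Fin p, s ≠ Sum.inr m → Q * sigmaZ s = sigmaZ s * Q) :
    ∀ t : ℝ,
      Matrix.trace (rhoTh a b W * P *
          (NormedSpace.exp ((Complex.I * t) • Hrbm a b W) * Q *
            NormedSpace.exp ((-(Complex.I * t)) • Hrbm a b W)) * P *
          (NormedSpace.exp ((Complex.I * t) • Hrbm a b W) * Q *
            NormedSpace.exp ((-(Complex.I * t)) • Hrbm a b W))) =
        ((Real.cos (4 * W k m * t) : ℝ) : ℂ) -
          Complex.I *
            Matrix.trace (rhoTh a b W * sigmaZ (Sum.inl k) * sigmaZ (Sum.inr m)) *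
            ((Real.sin (4 * W k m * t) : ℝ) : ℂ) := by
  intro t
  rw [show ∀ X, rhoTh a b W * P * X * P * X = rhoTh a b W * (P * X * P * X) by
      simp only [mul_assoc, implies_true],
    otoc_operator_eq k m a b W hP2 hQ2 hPQ hPanti hQanti hPcomm hQcomm t,
    mul_sub, mul_smul_comm, mul_smul_comm, mul_one, trace_sub, trace_smul, trace_smul,
    trace_rhoTh, smul_eq_mul, smul_eq_mul, mul_assoc (rhoTh a b W)]
  ring

end
end

section
/- Let ι be a finite type and H, X : Matrix ι ι ℂ with X·X = 1 and H·(X·H·X) = (X·H·X)·H. Then for every t ∈ ℝ, Matrix.exp((Complex.I·t)•H) · X · Matrix.exp((−(Complex.I·t))•H) = Matrix.exp((Complex.I·t)•(H − X·H·X)) · X. -/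
open Matrix NormedSpace

/-!
Conjugating by the involution `X` turns `exp (-A)` into `exp (-(X A X))`, so
`exp A · X · exp (-A) = exp A · exp (-(X A X)) · X`; when `A` and `X A X` commute the two
exponentials merge into `exp (A - X A X)`.
-/

namespace Matrix

variable {ι 𝔸 : Type*} [Fintype ι] [DecidableEq ι]
  [NormedRing 𝔸] [NormedAlgebra ℚ 𝔸] [CompleteSpace 𝔸]

theorem mul_exp_mul_of_mul_self_eq_one {X : Matrix ι ι 𝔸} (hX : X * X = 1)
    (A : Matrix ι ι 𝔸) : X * exp A * X = exp (X * A * X) :=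
  (exp_units_conj ⟨X, X, hX, hX⟩ A).symm

theorem exp_mul_mul_exp_neg_of_mul_self_eq_one {X A : Matrix ι ι 𝔸} (hX : X * X = 1)
    (hcomm : Commute A (X * A * X)) :
    exp A * X * exp (-A) = exp (A - X * A * X) * X := by
  have hconj : X * exp (-A) * X = exp (-(X * A * X)) := by
    rw [mul_exp_mul_of_mul_self_eq_one hX, Matrix.mul_neg, Matrix.neg_mul]
  calc exp A * X * exp (-A)
      = exp A * (X * exp (-A) * X) * X := by simp only [mul_assoc, hX, mul_one]
    _ = exp (A - X * A * X) * X := by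
        rw [hconj, sub_eq_add_neg, exp_add_of_commute _ _ hcomm.neg_right]

end Matrix

/-- Abstract Lemma B.1: Heisenberg evolution of an involution `X` under `H`,
when `H` commutes with `X·H·X`:
`e^{itH} X e^{-itH} = e^{it(H - XHX)} X`. -/
theorem heisenberg_evolution_involution {ι : Type*} [Fintype ι] [DecidableEq ι]
    (H X : Matrix ι ι ℂ) (hX : X * X = 1)
    (hcomm : H * (X * H * X) = (X * H * X) * H) :
    ∀ t : ℝ,
      exp ((Complex.I * t) • H) * X * exp ((-(Complex.I * t)) • H) =
        exp ((Complex.I * t) • (H - X * H * X)) * X := by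
  intro t
  set c : ℂ := Complex.I * t
  have hcomm_smul : Commute (c • H) (X * (c • H) * X) := by
    rw [Matrix.mul_smul, Matrix.smul_mul]
    exact ((Commute.smul_left hcomm c).smul_right c)
  rw [neg_smul, exp_mul_mul_exp_neg_of_mul_self_eq_one hX hcomm_smul, smul_sub,
    Matrix.mul_smul, Matrix.smul_mul]
end

section
/- Let σx := !![0,1;1,0] and σz := !![1,0;0,−1] as matrices in Matrix (Fin 2) (Fin 2) ℂ, and on ℂ⁴ (index type Fin 2 × Fin 2, via the Kronecker product ⊗ₖ) set X₁ := σx ⊗ₖ 1, X₂ := 1 ⊗ₖ σx, Z := σz ⊗ₖ σz, and for θ : ℝ let U θ := Matrix.exp ((Complex.I·θ)•Z). Then for all θ : ℝ, X₁·(U θ·X₂) − (U θ·X₂)·X₁ = ((−2)·Complex.I·(Real.sin θ : ℂ)) • (Z·X₁·X₂). -/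
open Matrix Kronecker NormedSpace

noncomputable section

/-- Pauli x. -/
def σx : Matrix (Fin 2) (Fin 2) ℂ := !![0, 1; 1, 0]

/-- Pauli z. -/
def σz : Matrix (Fin 2) (Fin 2) ℂ := !![1, 0; 0, -1]

/-- Pauli x on the first (visible) qubit. -/
def X₁ : Matrix (Fin 2 × Fin 2) (Fin 2 × Fin 2) ℂ := σx ⊗ₖ 1

/-- Pauli x on the second (hidden) qubit. -/
def X₂ : Matrix (Fin 2 × Fin 2) (Fin 2 × Fin 2) ℂ := (1 : Matrix (Fin 2) (Fin 2) ℂ) ⊗ₖ σx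

/-- The Ising interaction `σz ⊗ σz`. -/
def Z : Matrix (Fin 2 × Fin 2) (Fin 2 × Fin 2) ℂ := σz ⊗ₖ σz

/-- The evolution `e^{iθZ}`. -/
def U (θ : ℝ) : Matrix (Fin 2 × Fin 2) (Fin 2 × Fin 2) ℂ := exp ((Complex.I * θ) • Z)

/-! The Ising term squares to one, so `e^{iθZ} = cos θ + i sin θ · Z`. The probe `X₁` anticommutes
with `Z` and commutes with `X₂`, hence the commutator only sees the `Z` part, which picks up a
factor `-2`. -/

section InvolutionExp

variable {𝔸 : Type*} [Ring 𝔸] [Algebra ℂ 𝔸] [TopologicalSpace 𝔸] [IsTopologicalRing 𝔸]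
  [ContinuousSMul ℂ 𝔸]

theorem hasSum_exp_series_smul_of_mul_self_eq_one {A : 𝔸} (hA : A * A = 1) (z : ℂ) :
    HasSum (fun n : ℕ => ((n.factorial : ℂ)⁻¹) • (z • A) ^ n)
      (Complex.cosh z • (1 : 𝔸) + Complex.sinh z • A) := by
  have hpow (k : ℕ) : A ^ (2 * k) = 1 := by rw [pow_mul, sq, hA, one_pow]
  refine HasSum.even_add_odd ?_ ?_
  · convert (Complex.hasSum_cosh z).smul_const (1 : 𝔸) using 2 with k
    rw [smul_pow, hpow, smul_smul, div_eq_inv_mul]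
  · convert (Complex.hasSum_sinh z).smul_const A using 2 with k
    rw [smul_pow, pow_succ A, hpow, one_mul, smul_smul, div_eq_inv_mul]

theorem exp_smul_of_mul_self_eq_one [T2Space 𝔸] {A : 𝔸} (hA : A * A = 1) (z : ℂ) :
    exp (z • A) = Complex.cosh z • (1 : 𝔸) + Complex.sinh z • A := by
  rw [exp_eq_tsum ℂ]
  exact (hasSum_exp_series_smul_of_mul_self_eq_one hA z).tsum_eq

theorem exp_I_mul_smul_of_mul_self_eq_one [T2Space 𝔸] {A : 𝔸} (hA : A * A = 1) (θ : ℝ) :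
    exp ((Complex.I * θ) • A) = (Real.cos θ : ℂ) • (1 : 𝔸) + (Complex.I * Real.sin θ) • A := by
  rw [mul_comm, exp_smul_of_mul_self_eq_one hA, Complex.cosh_mul_I, Complex.sinh_mul_I,
    Complex.ofReal_cos, Complex.ofReal_sin, mul_comm (Complex.sin _)]

end InvolutionExp

theorem commutator_smul_one_add_smul_of_anticommute {R 𝔸 : Type*} [CommRing R] [Ring 𝔸]
    [Algebra R 𝔸] {X Z : 𝔸} (h : X * Z = -(Z * X)) (c s : R) :
    X * (c • 1 + s • Z) - (c • 1 + s • Z) * X = (-2 * s) • (Z * X) := by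
  rw [mul_add, add_mul, mul_smul_comm, smul_mul_assoc, mul_smul_comm, smul_mul_assoc, h,
    mul_one, one_mul]
  module

theorem σz_mul_self : σz * σz = 1 := by
  ext i j; fin_cases i <;> fin_cases j <;> simp [σz]

theorem σx_mul_σz : σx * σz = -(σz * σx) := by
  ext i j; fin_cases i <;> fin_cases j <;> simp [σx, σz]

theorem Z_mul_self : Z * Z = 1 := by
  rw [Z, ← mul_kronecker_mul, σz_mul_self, one_kronecker_one]

theorem X₁_mul_Z : X₁ * Z = -(Z * X₁) := by
  rw [X₁, Z, ← mul_kronecker_mul, ← mul_kronecker_mul, σx_mul_σz, one_mul, mul_one,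
    ← neg_one_smul ℂ (σz * σx), smul_kronecker, neg_one_smul]

theorem commute_X₁_X₂ : Commute X₁ X₂ := by
  simp only [Commute, SemiconjBy, X₁, X₂, ← mul_kronecker_mul, one_mul, mul_one]

theorem U_eq_cos_smul_one_add_sin_smul_Z (θ : ℝ) :
    U θ = (Real.cos θ : ℂ) • 1 + (Complex.I * Real.sin θ) • Z :=
  exp_I_mul_smul_of_mul_self_eq_one Z_mul_self θ

/-- Two-qubit core of Lemma B.2(1): the commutator of the probe Pauli with the
Heisenberg-evolved hidden Pauli equals `-2i sin θ · Z X₁ X₂`. -/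
theorem pauli_commutator_evolved (θ : ℝ) :
    X₁ * (U θ * X₂) - (U θ * X₂) * X₁ =
      ((-2) * Complex.I * (Real.sin θ : ℂ)) • (Z * X₁ * X₂) := by
  calc X₁ * (U θ * X₂) - (U θ * X₂) * X₁ = (X₁ * U θ - U θ * X₁) * X₂ := by
        rw [mul_assoc (U θ), ← commute_X₁_X₂.eq, sub_mul, mul_assoc, mul_assoc]
    _ = ((-2) * Complex.I * (Real.sin θ : ℂ)) • (Z * X₁ * X₂) := by
        rw [U_eq_cos_smul_one_add_sin_smul_Z,
          commutator_smul_one_add_smul_of_anticommute X₁_mul_Z, smul_mul_assoc, mul_assoc,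
          mul_assoc (-2)]

end
end

section
/- Let ι be a finite type and ρ, U₁, U₂ : Matrix ι ι ℂ with ρᴴ = ρ and U₁, U₂ unitary (U₁·U₁ᴴ = 1 = U₁ᴴ·U₁ and likewise for U₂). Let A := U₁·U₂ + U₂·U₁ and B := U₁·U₂ − U₂·U₁. Then Matrix.trace (ρ · Aᴴ · B) = 2·Complex.I·(Complex.im (Matrix.trace (ρ · U₁ᴴ · U₂ᴴ · U₁ · U₂)) : ℂ). -/
open Matrix

/-- Appendix A, imaginary-part decomposition:
`⟨A†B⟩ = 2i Im(C)` where `A = {U₁,U₂}₊`, `B = [U₁,U₂]` and `C = ⟨U₁†U₂†U₁U₂⟩`. -/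
theorem otoc_imag_part_anticommutator {ι : Type*} [Fintype ι] [DecidableEq ι]
    (ρ U₁ U₂ : Matrix ι ι ℂ)
    (hρ : ρᴴ = ρ)
    (hU₁ : U₁ * U₁ᴴ = 1) (hU₁' : U₁ᴴ * U₁ = 1)
    (hU₂ : U₂ * U₂ᴴ = 1) (hU₂' : U₂ᴴ * U₂ = 1) :
    Matrix.trace (ρ * (U₁ * U₂ + U₂ * U₁)ᴴ * (U₁ * U₂ - U₂ * U₁)) =
      2 * Complex.I *
        ((Complex.im (Matrix.trace (ρ * U₁ᴴ * U₂ᴴ * U₁ * U₂)) : ℝ) : ℂ) := by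
  set C := Matrix.trace (ρ * U₁ᴴ * U₂ᴴ * U₁ * U₂) with hC
  have hstar : Matrix.trace (ρ * (U₂ᴴ * U₁ᴴ * U₂ * U₁)) = starRingEnd ℂ C := by
    have h1 : starRingEnd ℂ C = Matrix.trace (ρ * U₁ᴴ * U₂ᴴ * U₁ * U₂)ᴴ := by
      rw [Matrix.trace_conjTranspose]; rfl
    rw [h1]
    simp only [Matrix.conjTranspose_mul, hρ, Matrix.conjTranspose_conjTranspose]
    rw [show U₂ᴴ * (U₁ᴴ * (U₂ * (U₁ * ρ))) = (U₂ᴴ * U₁ᴴ * U₂ * U₁) * ρ by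
      noncomm_ring]
    rw [Matrix.trace_mul_comm]
  have expand : ρ * (U₁ * U₂ + U₂ * U₁)ᴴ * (U₁ * U₂ - U₂ * U₁) =
      ρ * (U₁ᴴ * U₂ᴴ * U₁ * U₂) - ρ * (U₂ᴴ * U₁ᴴ * U₂ * U₁)
      + ρ * (U₂ᴴ * U₁ᴴ * U₁ * U₂) - ρ * (U₁ᴴ * U₂ᴴ * U₂ * U₁) := by
    simp only [Matrix.conjTranspose_add, Matrix.conjTranspose_mul]
    noncomm_ring
  have h2 : U₂ᴴ * U₁ᴴ * U₁ * U₂ = 1 := by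
    rw [mul_assoc U₂ᴴ, hU₁', mul_one, hU₂']
  have h3 : U₁ᴴ * U₂ᴴ * U₂ * U₁ = 1 := by
    rw [mul_assoc U₁ᴴ, hU₂', mul_one, hU₁']
  rw [expand, h2, h3]
  simp only [Matrix.trace_sub, Matrix.trace_add, hstar]
  have hCeq : Matrix.trace (ρ * (U₁ᴴ * U₂ᴴ * U₁ * U₂)) = C := by
    rw [hC]; rw [show ρ * (U₁ᴴ * U₂ᴴ * U₁ * U₂) = ρ * U₁ᴴ * U₂ᴴ * U₁ * U₂ by
      noncomm_ring]
  rw [hCeq]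
  have := Complex.sub_conj C
  rw [add_sub_cancel_right, this]
  push_cast
  ring
end

section
/- Let λ : Fin 2 → Fin 2 → ℝ be a joint probability distribution of two spins taking values z 0 = 1, z 1 = −1 (λ i j ≥ 0 for all i j, and ∑ i, ∑ j, λ i j = 1). Define the marginals μ i := ∑ j, λ i j and ν j := ∑ i, λ i j, the covariance η := (∑ i, ∑ j, z i · z j · λ i j) − (∑ i, z i · μ i)·(∑ j, z j · ν j), and the mutual information in bits I := (∑ i, −(μ i)·Real.logb 2 (μ i)) + (∑ j, −(ν j)·Real.logb 2 (ν j)) − (∑ i, ∑ j, −(λ i j)·Real.logb 2 (λ i j)). Then I ≥ 2 + ((1 + η)/2)·Real.logb 2 ((1 + η)/4) + ((1 − η)/2)·Real.logb 2 ((1 − η)/4). -/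
open scoped BigOperators

noncomputable section

/-- Spin values: `z 0 = 1`, `z 1 = -1`. -/
def z : Fin 2 → ℝ := ![1, -1]

/-- First marginal of a joint distribution of two spins. -/
def mu (lam : Fin 2 → Fin 2 → ℝ) (i : Fin 2) : ℝ := ∑ j, lam i j

/-- Second marginal of a joint distribution of two spins. -/
def nu (lam : Fin 2 → Fin 2 → ℝ) (j : Fin 2) : ℝ := ∑ i, lam i j

/-- The covariance `η = ⟨z₁z₂⟩ - ⟨z₁⟩⟨z₂⟩` of the two spins. -/
def eta (lam : Fin 2 → Fin 2 → ℝ) : ℝ :=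
  (∑ i, ∑ j, z i * z j * lam i j) - (∑ i, z i * mu lam i) * (∑ j, z j * nu lam j)

/-- The mutual information (in bits) of the two spins. -/
def MI (lam : Fin 2 → Fin 2 → ℝ) : ℝ :=
  (∑ i, -(mu lam i) * Real.logb 2 (mu lam i)) +
    (∑ j, -(nu lam j) * Real.logb 2 (nu lam j)) -
    ∑ i, ∑ j, -(lam i j) * Real.logb 2 (lam i j)

/-- `phi t = t * log t` (natural log). -/
def phi (t : ℝ) : ℝ := t * Real.log t

lemma keyE (p q r s x : ℝ) (hp : 0 ≤ p) (hq : 0 ≤ q) (hr : 0 ≤ r) (hs : 0 ≤ s)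
    (hx : 0 ≤ x) (hpq : p * s = q * r) (hsum : p + q + r + s = 1)
    (hbq : x ≤ 4 * q) (hbr : x ≤ 4 * r) :
    0 ≤ 1 - 16 * p * s + 2 * x * (2 * (q + r) - 1) := by
  set k := Real.sqrt (16 * p * s) with hk
  have hk0 : 0 ≤ k := Real.sqrt_nonneg _
  have hk2 : k ^ 2 = 16 * p * s := Real.sq_sqrt (by positivity)
  have hxk : x ≤ k := by
    have h1 : x ^ 2 ≤ k ^ 2 := by nlinarith
    nlinarith
  have hqr : k / 4 = Real.sqrt q * Real.sqrt r := by
    rw [hk, show (16 : ℝ) * p * s = (4:ℝ)^2 * (q*r) by linarith [hpq], Real.sqrt_mul (by positivity),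
      Real.sqrt_sq (by norm_num : (0:ℝ) ≤ 4), Real.sqrt_mul hq]
    ring
  have hBk : k ≤ 2 * (q + r) := by
    have h2 : 2 * (Real.sqrt q * Real.sqrt r) ≤ q + r := by
      nlinarith [sq_nonneg (Real.sqrt q - Real.sqrt r), Real.sq_sqrt hq, Real.sq_sqrt hr]
    nlinarith
  have hk1 : k ≤ 1 := by nlinarith [sq_nonneg (p - s)]
  rcases le_total 1 (2 * (q + r)) with h | h
  · nlinarith
  · nlinarith [mul_nonneg hk0 (sub_nonneg.2 hxk), sq_nonneg (1 - k),
      mul_nonneg (sub_nonneg.2 hxk) (sub_nonneg.2 h)]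

lemma key_poly (p q r s x : ℝ) (hp : 0 ≤ p) (hq : 0 ≤ q) (hr : 0 ≤ r) (hs : 0 ≤ s)
    (hx : 0 ≤ x) (hpq : p * s = q * r) (hsum : p + q + r + s = 1)
    (hbq : x ≤ 4 * q) (hbr : x ≤ 4 * r) :
    (q - x/4) * (r - x/4) * (1 + x)^2 ≤ (p + x/4) * (s + x/4) * (1 - x)^2 := by
  have hE := keyE p q r s x hp hq hr hs hx hpq hsum hbq hbr
  have h2 : (p + x/4) * (s + x/4) * (1-x)^2 - (q - x/4) * (r - x/4) * (1+x)^2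
      = x/4 * (1 - 16 * p * s + 2 * x * (2 * (q + r) - 1)) := by
    linear_combination ((1+x)^2) * hpq + (x/4) * (1-x)^2 * hsum
  nlinarith [mul_nonneg hx hE]

set_option maxHeartbeats 2000000 in
lemma scalar_core (u v e : ℝ) (hu0 : 0 ≤ u) (hu1 : u ≤ 1) (hv0 : 0 ≤ v) (hv1 : v ≤ 1)
    (he0 : 0 ≤ e) (hbq : e ≤ 4 * (u * (1 - v))) (hbr : e ≤ 4 * ((1 - u) * v)) :
    phi (u*v) + phi (u*(1-v)) + phi ((1-u)*v) + phi ((1-u)*(1-v)) - 2 * phi (1/2)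
      ≤ phi (u*v + e/4) + phi (u*(1-v) - e/4) + phi ((1-u)*v - e/4) + phi ((1-u)*(1-v) + e/4)
        - phi ((1+e)/2) - phi ((1-e)/2) := by
  have hphi2 : phi ((1:ℝ)/2) = -(Real.log 2)/2 := by
    unfold phi
    rw [show (1:ℝ)/2 = 2⁻¹ by norm_num, Real.log_inv]
    ring
  -- e ≤ 1
  have hq0 : 0 ≤ u * (1 - v) := by nlinarith
  have hr0 : 0 ≤ (1 - u) * v := by nlinarith
  have hee : e * e ≤ (4 * (u * (1-v))) * (4 * ((1-u) * v)) := by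
    have h4 : (0:ℝ) ≤ 4 * (u * (1-v)) := by linarith
    exact mul_le_mul hbq hbr he0 h4
  have hu1' : (0:ℝ) ≤ 1 - u := by linarith
  have hv1' : (0:ℝ) ≤ 1 - v := by linarith
  have hprod : (0:ℝ) ≤ (u*v) * ((1-u)*(1-v)) := mul_nonneg (mul_nonneg hu0 hv0) (mul_nonneg hu1' hv1')
  have he1 : e ≤ 1 := by
    nlinarith [sq_nonneg (2*u - 1), sq_nonneg (2*v - 1), hprod, sq_nonneg (u - v), sq_nonneg (u + v - 1)]
  set F : ℝ → ℝ := fun x => phi (u*v + x/4) + phi (u*(1-v) - x/4) + phi ((1-u)*v - x/4)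
      + phi ((1-u)*(1-v) + x/4) - phi ((1+x)/2) - phi ((1-x)/2) with hFdef
  have hder : ∀ x ∈ Set.Ioo (0:ℝ) e, HasDerivAt F
      ((Real.log (u*v + x/4) + 1) * (1/4) + (Real.log (u*(1-v) - x/4) + 1) * (-(1/4))
        + (Real.log ((1-u)*v - x/4) + 1) * (-(1/4)) + (Real.log ((1-u)*(1-v) + x/4) + 1) * (1/4)
        - (Real.log ((1+x)/2) + 1) * (1/2) - (Real.log ((1-x)/2) + 1) * (-(1/2))) x := by
    intro x hx
    obtain ⟨hx0, hxe⟩ := hx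
    have hA : 0 < u*v + x/4 := by nlinarith [mul_nonneg hu0 hv0]
    have hB : 0 < u*(1-v) - x/4 := by linarith
    have hC : 0 < (1-u)*v - x/4 := by linarith
    have hD : 0 < (1-u)*(1-v) + x/4 := by
      nlinarith [mul_nonneg (show (0:ℝ) ≤ 1-u by linarith) (show (0:ℝ) ≤ 1-v by linarith)]
    have hW1 : ((1:ℝ)+x)/2 ≠ 0 := by
      have : (0:ℝ) < (1+x)/2 := by linarith
      exact this.ne'
    have hW2 : ((1:ℝ)-x)/2 ≠ 0 := by
      have hx1 : x < 1 := lt_of_lt_of_le hxe he1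
      have : (0:ℝ) < (1-x)/2 := by linarith
      exact this.ne'
    have d1 : HasDerivAt (fun y : ℝ => u*v + y/4) (1/4) x := by
      simpa using ((hasDerivAt_id x).div_const 4).const_add (u*v)
    have d2 : HasDerivAt (fun y : ℝ => u*(1-v) - y/4) (-(1/4)) x := by
      simpa using ((hasDerivAt_id x).div_const 4).const_sub (u*(1-v))
    have d3 : HasDerivAt (fun y : ℝ => (1-u)*v - y/4) (-(1/4)) x := by
      simpa using ((hasDerivAt_id x).div_const 4).const_sub ((1-u)*v)
    have d4 : HasDerivAt (fun y : ℝ => (1-u)*(1-v) + y/4) (1/4) x := by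
      simpa using ((hasDerivAt_id x).div_const 4).const_add ((1-u)*(1-v))
    have d5 : HasDerivAt (fun y : ℝ => (1+y)/2) (1/2) x := by
      simpa using ((hasDerivAt_id x).const_add 1).div_const 2
    have d6 : HasDerivAt (fun y : ℝ => (1-y)/2) (-1/2) x := by
      have := ((hasDerivAt_id x).const_sub 1).div_const 2
      simpa using this
    have p1 := (Real.hasDerivAt_mul_log hA.ne').comp x d1
    have p2 := (Real.hasDerivAt_mul_log hB.ne').comp x d2
    have p3 := (Real.hasDerivAt_mul_log hC.ne').comp x d3
    have p4 := (Real.hasDerivAt_mul_log hD.ne').comp x d4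
    have p5 := (Real.hasDerivAt_mul_log hW1).comp x d5
    have p6 := (Real.hasDerivAt_mul_log hW2).comp x d6
    have comb := ((((p1.add p2).add p3).add p4).sub p5).sub p6
    have heq : (Real.log (u*v + x/4) + 1) * (1/4) + (Real.log (u*(1-v) - x/4) + 1) * (-(1/4))
        + (Real.log ((1-u)*v - x/4) + 1) * (-(1/4)) + (Real.log ((1-u)*(1-v) + x/4) + 1) * (1/4)
        - (Real.log ((1+x)/2) + 1) * (1/2) - (Real.log ((1-x)/2) + 1) * (-(1/2))
        = (Real.log (u*v + x/4) + 1) * (1/4) + (Real.log (u*(1-v) - x/4) + 1) * (-(1/4))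
        + (Real.log ((1-u)*v - x/4) + 1) * (-(1/4)) + (Real.log ((1-u)*(1-v) + x/4) + 1) * (1/4)
        - (Real.log ((1+x)/2) + 1) * (1/2) - (Real.log ((1-x)/2) + 1) * (-1/2) := by ring
    rw [heq]
    exact comb
  have hmono : MonotoneOn F (Set.Icc 0 e) := by
    apply monotoneOn_of_deriv_nonneg (convex_Icc 0 e)
    · have hφ : Continuous phi := Real.continuous_mul_log
      have c1 : Continuous fun x:ℝ => u*v + x/4 := by fun_prop
      have c2 : Continuous fun x:ℝ => u*(1-v) - x/4 := by fun_prop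
      have c3 : Continuous fun x:ℝ => (1-u)*v - x/4 := by fun_prop
      have c4 : Continuous fun x:ℝ => (1-u)*(1-v) + x/4 := by fun_prop
      have c5 : Continuous fun x:ℝ => (1+x)/2 := by fun_prop
      have c6 : Continuous fun x:ℝ => (1-x)/2 := by fun_prop
      have : Continuous F := by
        rw [hFdef]
        exact (((((hφ.comp c1).add (hφ.comp c2)).add (hφ.comp c3)).add (hφ.comp c4)).sub
          (hφ.comp c5)).sub (hφ.comp c6)
      exact this.continuousOn
    · intro x hx
      rw [interior_Icc] at hx
      exact (hder x hx).differentiableAt.differentiableWithinAt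
    · intro x hx
      rw [interior_Icc] at hx
      rw [(hder x hx).deriv]
      obtain ⟨hx0, hxe⟩ := hx
      have hA : 0 < u*v + x/4 := by nlinarith [mul_nonneg hu0 hv0]
      have hB : 0 < u*(1-v) - x/4 := by linarith
      have hC : 0 < (1-u)*v - x/4 := by linarith
      have hD : 0 < (1-u)*(1-v) + x/4 := by nlinarith [mul_nonneg hu1' hv1']
      have hx1 : x < 1 := lt_of_lt_of_le hxe he1
      have h1x : (0:ℝ) < 1 + x := by linarith
      have h1x' : (0:ℝ) < 1 - x := by linarith
      have hkey := key_poly (u*v) (u*(1-v)) ((1-u)*v) ((1-u)*(1-v)) x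
        (mul_nonneg hu0 hv0) hq0 hr0 (mul_nonneg hu1' hv1') (le_of_lt hx0)
        (by ring) (by ring) (by linarith) (by linarith)
      have hlog : Real.log ((u*(1-v) - x/4) * (((1-u)*v - x/4) * (1+x)^2))
          ≤ Real.log ((u*v + x/4) * (((1-u)*(1-v) + x/4) * (1-x)^2)) := by
        apply Real.log_le_log (by positivity)
        nlinarith [hkey]
      have e1 : Real.log ((u*(1-v) - x/4) * (((1-u)*v - x/4) * (1+x)^2))
          = Real.log (u*(1-v) - x/4) + Real.log ((1-u)*v - x/4) + 2 * Real.log (1+x) := by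
        rw [Real.log_mul hB.ne' (by positivity), Real.log_mul hC.ne' (by positivity),
          Real.log_pow]
        push_cast
        ring
      have e2 : Real.log ((u*v + x/4) * (((1-u)*(1-v) + x/4) * (1-x)^2))
          = Real.log (u*v + x/4) + Real.log ((1-u)*(1-v) + x/4) + 2 * Real.log (1-x) := by
        rw [Real.log_mul hA.ne' (by positivity), Real.log_mul hD.ne' (by positivity),
          Real.log_pow]
        push_cast
        ring
      rw [e1, e2] at hlog
      have e3 : Real.log ((1+x)/2) = Real.log (1+x) - Real.log 2 :=
        Real.log_div h1x.ne' two_ne_zero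
      have e4 : Real.log ((1-x)/2) = Real.log (1-x) - Real.log 2 :=
        Real.log_div h1x'.ne' two_ne_zero
      rw [e3, e4]
      linarith
  have h0m : (0:ℝ) ∈ Set.Icc (0:ℝ) e := ⟨le_refl 0, he0⟩
  have hem : e ∈ Set.Icc (0:ℝ) e := ⟨he0, le_refl e⟩
  have := hmono h0m hem he0
  have hF0 : F 0 = phi (u*v) + phi (u*(1-v)) + phi ((1-u)*v) + phi ((1-u)*(1-v)) - 2 * phi (1/2) := by
    rw [hFdef]
    norm_num
    ring
  have hFe : F e = phi (u*v + e/4) + phi (u*(1-v) - e/4) + phi ((1-u)*v - e/4)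
      + phi ((1-u)*(1-v) + e/4) - phi ((1+e)/2) - phi ((1-e)/2) := by rw [hFdef]
  rw [hF0, hFe] at this
  exact this

lemma phi_mul (s t : ℝ) (hs : 0 ≤ s) (ht : 0 ≤ t) : phi (s*t) = s * phi t + t * phi s := by
  rcases eq_or_lt_of_le hs with h | h
  · simp [phi, ← h]
  rcases eq_or_lt_of_le ht with h' | h'
  · simp [phi, ← h']
  unfold phi
  rw [Real.log_mul h.ne' h'.ne']
  ring

lemma half_log (t : ℝ) (ht : 0 ≤ t) : (t/2) * Real.log (t/4) = phi (t/2) - (t/2) * Real.log 2 := by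
  rcases eq_or_lt_of_le ht with h | h
  · simp [phi, ← h]
  have h4 : t/4 = (t/2)/2 := by ring
  rw [h4, Real.log_div (by positivity) two_ne_zero]
  unfold phi
  ring

set_option maxHeartbeats 1000000 in
lemma scalar_main (a b c d : ℝ) (ha : 0 ≤ a) (hb : 0 ≤ b) (hc : 0 ≤ c) (hd : 0 ≤ d)
    (hs : a + b + (c + d) = 1) :
    2*Real.log 2 + ((1 + 4*(a*d - b*c))/2) * Real.log ((1 + 4*(a*d - b*c))/4)
      + ((1 - 4*(a*d - b*c))/2) * Real.log ((1 - 4*(a*d - b*c))/4)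
    ≤ phi a + phi b + phi c + phi d
      - (phi (a+b) + phi (c+d) + phi (a+c) + phi (b+d)) := by
  have hu0 : 0 ≤ a + b := by linarith
  have hu1 : a + b ≤ 1 := by linarith
  have hv0 : 0 ≤ a + c := by linarith
  have hv1 : a + c ≤ 1 := by linarith
  have h1pe : 0 ≤ 1 + 4*(a*d - b*c) := by
    nlinarith [sq_nonneg (b - c), mul_nonneg ha hd, sq_nonneg (a + d),
      mul_nonneg (add_nonneg ha hd) (add_nonneg hb hc), mul_nonneg hb hc]
  have h1me : 0 ≤ 1 - 4*(a*d - b*c) := by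
    nlinarith [sq_nonneg (a - d), mul_nonneg hb hc, sq_nonneg (b + c),
      mul_nonneg (add_nonneg ha hd) (add_nonneg hb hc), mul_nonneg ha hd]
  have hphi2 : phi ((1:ℝ)/2) = -(Real.log 2)/2 := by
    unfold phi
    rw [show (1:ℝ)/2 = 2⁻¹ by norm_num, Real.log_inv]
    ring
  -- rewrite LB via half_log
  have hlb1 := half_log (1 + 4*(a*d - b*c)) h1pe
  have hlb2 := half_log (1 - 4*(a*d - b*c)) h1me
  -- marginal identity
  have hmarg : phi (a+b) + phi (1-(a+b)) + phi (a+c) + phi (1-(a+c))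
      = phi ((a+b)*(a+c)) + phi ((a+b)*(1-(a+c))) + phi ((1-(a+b))*(a+c))
        + phi ((1-(a+b))*(1-(a+c))) := by
    rw [phi_mul _ _ hu0 hv0, phi_mul _ _ hu0 (show (0:ℝ) ≤ 1-(a+c) by linarith),
      phi_mul _ _ (show (0:ℝ) ≤ 1-(a+b) by linarith) hv0,
      phi_mul _ _ (show (0:ℝ) ≤ 1-(a+b) by linarith) (show (0:ℝ) ≤ 1-(a+c) by linarith)]
    ring
  have hcd : c + d = 1 - (a+b) := by linarith
  have hbd : b + d = 1 - (a+c) := by linarith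
  -- core inequality
  have key : phi ((a+b)*(a+c)) + phi ((a+b)*(1-(a+c))) + phi ((1-(a+b))*(a+c))
      + phi ((1-(a+b))*(1-(a+c))) - 2 * phi (1/2)
      ≤ phi a + phi b + phi c + phi d - phi ((1 + 4*(a*d - b*c))/2)
        - phi ((1 - 4*(a*d - b*c))/2) := by
    rcases le_or_gt 0 (4*(a*d - b*c)) with he0 | he0
    · have hcore := scalar_core (a+b) (a+c) (4*(a*d - b*c)) hu0 hu1 hv0 hv1 he0
        (by nlinarith [hb]) (by nlinarith [hc])
      have e1 : (a+b)*(a+c) + (4*(a*d - b*c))/4 = a := by linear_combination a * hs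
      have e2 : (a+b)*(1-(a+c)) - (4*(a*d - b*c))/4 = b := by linear_combination (-a) * hs
      have e3 : (1-(a+b))*(a+c) - (4*(a*d - b*c))/4 = c := by linear_combination (-a) * hs
      have e4 : (1-(a+b))*(1-(a+c)) + (4*(a*d - b*c))/4 = d := by
        linear_combination (a-1) * hs
      rw [e1, e2, e3, e4] at hcore
      linarith
    · have he0' : 0 ≤ -(4*(a*d - b*c)) := by linarith
      have hcore := scalar_core (a+b) (1-(a+c)) (-(4*(a*d - b*c))) hu0 hu1 (by linarith)
        (by linarith) he0' (by nlinarith [ha]) (by nlinarith [hd])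
      have e1 : (a+b)*(1-(a+c)) + (-(4*(a*d - b*c)))/4 = b := by linear_combination (-a) * hs
      have e2 : (a+b)*(1-(1-(a+c))) - (-(4*(a*d - b*c)))/4 = a := by linear_combination a * hs
      have e3 : (1-(a+b))*(1-(a+c)) - (-(4*(a*d - b*c)))/4 = d := by
        linear_combination (a-1) * hs
      have e4 : (1-(a+b))*(1-(1-(a+c))) + (-(4*(a*d - b*c)))/4 = c := by
        linear_combination (-a) * hs
      have e5 : (1 + -(4*(a*d - b*c)))/2 = (1 - 4*(a*d - b*c))/2 := by ring
      have e6 : (1 - -(4*(a*d - b*c)))/2 = (1 + 4*(a*d - b*c))/2 := by ring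
      have e7 : (a+b)*(1-(1-(a+c))) = (a+b)*(a+c) := by ring
      have e8 : (1-(a+b))*(1-(1-(a+c))) = (1-(a+b))*(a+c) := by ring
      rw [e1, e2, e3, e4, e7, e8, e5, e6] at hcore
      linarith
  rw [hcd, hbd]
  linarith [key, hmarg, hlb1, hlb2, hphi2]

set_option maxHeartbeats 1000000 in
/-- Theorem 2, lower bound LB: `I ≥ 2 - 2𝓛((1+η)/4) - 2𝓛((1-η)/4)`. -/
theorem mutual_information_lower_bound (lam : Fin 2 → Fin 2 → ℝ)
    (hpos : ∀ i j, 0 ≤ lam i j) (hsum : ∑ i, ∑ j, lam i j = 1) :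
    MI lam ≥ 2 + ((1 + eta lam) / 2) * Real.logb 2 ((1 + eta lam) / 4) +
      ((1 - eta lam) / 2) * Real.logb 2 ((1 - eta lam) / 4) := by
  have hl2 : (0:ℝ) < Real.log 2 := Real.log_pos (by norm_num)
  have ha := hpos 0 0
  have hb := hpos 0 1
  have hc := hpos 1 0
  have hd := hpos 1 1
  have hs : lam 0 0 + lam 0 1 + (lam 1 0 + lam 1 1) = 1 := by
    simpa [Fin.sum_univ_two] using hsum
  have heta : eta lam = 4 * (lam 0 0 * lam 1 1 - lam 0 1 * lam 1 0) := by
    simp only [eta, mu, nu, z, Fin.sum_univ_two, Matrix.cons_val_zero, Matrix.cons_val_one,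
      Matrix.head_cons]
    linear_combination (lam 0 1 + lam 1 0 - lam 0 0 - lam 1 1) * hs
  have hmain := scalar_main (lam 0 0) (lam 0 1) (lam 1 0) (lam 1 1) ha hb hc hd hs
  rw [ge_iff_le, ← sub_nonneg, ← mul_nonneg_iff_of_pos_right hl2]
  have hexp : (MI lam - (2 + ((1 + eta lam) / 2) * Real.logb 2 ((1 + eta lam) / 4) +
      ((1 - eta lam) / 2) * Real.logb 2 ((1 - eta lam) / 4))) * Real.log 2
      = (phi (lam 0 0) + phi (lam 0 1) + phi (lam 1 0) + phi (lam 1 1)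
          - (phi (lam 0 0 + lam 0 1) + phi (lam 1 0 + lam 1 1) + phi (lam 0 0 + lam 1 0)
            + phi (lam 0 1 + lam 1 1)))
        - (2*Real.log 2 + ((1 + eta lam)/2) * Real.log ((1 + eta lam)/4)
          + ((1 - eta lam)/2) * Real.log ((1 - eta lam)/4)) := by
    simp only [MI, mu, nu, Fin.sum_univ_two, Real.logb, phi]
    field_simp
    ring
  rw [hexp, heta]
  linarith [hmain]

end
end

section
/- Let λ : Fin 2 → Fin 2 → ℝ be a joint probability distribution of two spins taking values z 0 = 1, z 1 = −1 (λ i j ≥ 0 for all i j, and ∑ i, ∑ j, λ i j = 1). Define the marginals μ i := ∑ j, λ i j and ν j := ∑ i, λ i j, the covariance η := (∑ i, ∑ j, z i · z j · λ i j) − (∑ i, z i · μ i)·(∑ j, z j · ν j), and the mutual information in bits I := (∑ i, −(μ i)·Real.logb 2 (μ i)) + (∑ j, −(ν j)·Real.logb 2 (ν j)) − (∑ i, ∑ j, −(λ i j)·Real.logb 2 (λ i j)). Let s := Real.sqrt (1 − |η|). Then I ≤ −((1 + s)/2)·Real.logb 2 ((1 + s)/2) − ((1 − s)/2)·Real.logb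 2 ((1 − s)/2). -/
/-!
Write `lam = [[a, b], [c, d]]`. Then `eta lam = 4 (a d - b c)`, and with `t = (1 - s) / 2` the bound
reads `I ≤ h t` where `h` is the binary entropy and `t (1 - t) = |a d - b c|`; we may assume
`b c ≤ a d`.

With the row marginals fixed, `I` is the row entropy minus the conditional entropy
`Σ_columns (x + y) h (x / (x + y))`, a sum of perspectives of the concave `h`; so `I` is convex
along segments of fixed row marginals. The matrices with given row marginals and given determinant
form such a segment, whose endpoints have a vanishing off-diagonal entry. For `[[a, 0], [c, d]]`
with `a d` fixed, `I` decreases in `c` (the derivative has the sign of a three-point concavity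
inequality for `log`), and at `c = 0` the matrix is diagonal with `I = h t`.
-/

open scoped BigOperators

noncomputable section

open Real Set

lemma mul_log_add_add_sub_mul_log_le {x a d : ℝ} (hx : 0 < x) (ha : 0 ≤ a) (had : a ≤ d) :
    a * log (x + d) + (d - a) * log x ≤ d * log (x + a) := by
  obtain rfl | hd := (ha.trans had).eq_or_lt
  · obtain rfl : a = 0 := le_antisymm had ha
    simp
  have hw : 0 ≤ 1 - a / d := by rw [sub_nonneg, div_le_one hd]; exact had
  have hconc := strictConcaveOn_log_Ioi.concaveOn.2 (mem_Ioi.2 (by linarith : 0 < x + d))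
    (mem_Ioi.2 hx) (div_nonneg ha hd.le) hw (add_sub_cancel _ _)
  have hmid : a / d * (x + d) + (1 - a / d) * x = x + a := by field_simp; ring
  simp only [smul_eq_mul, hmid] at hconc
  calc a * log (x + d) + (d - a) * log x
      = d * (a / d * log (x + d) + (1 - a / d) * log x) := by field_simp
    _ ≤ d * log (x + a) := mul_le_mul_of_nonneg_left hconc hd.le

def mixingEntropy (x y : ℝ) : ℝ := negMulLog x + negMulLog y - negMulLog (x + y)

lemma mixingEntropy_eq_mul_binEntropy (x y : ℝ) :
    mixingEntropy x y = (x + y) * binEntropy (x / (x + y)) := by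
  obtain hs | hs := eq_or_ne (x + y) 0
  · obtain rfl : y = -x := by linarith
    simp [mixingEntropy, negMulLog]
  have hx := negMulLog_mul (x + y) (x / (x + y))
  have hy := negMulLog_mul (x + y) (1 - x / (x + y))
  rw [mul_div_cancel₀ _ hs] at hx
  rw [mul_one_sub, mul_div_cancel₀ _ hs, add_sub_cancel_left] at hy
  rw [mixingEntropy, binEntropy_eq_negMulLog_add_negMulLog_one_sub, hx, hy]
  ring

lemma mixingEntropy_mul_mul (θ x y : ℝ) :
    mixingEntropy (θ * x) (θ * y) = θ * mixingEntropy x y := by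
  obtain rfl | hθ := eq_or_ne θ 0
  · simp [mixingEntropy]
  rw [mixingEntropy_eq_mul_binEntropy, mixingEntropy_eq_mul_binEntropy, ← mul_add,
    mul_div_mul_left _ _ hθ, mul_assoc]

lemma mixingEntropy_add_le {x₁ y₁ x₂ y₂ : ℝ} (hx₁ : 0 ≤ x₁) (hy₁ : 0 ≤ y₁) (hx₂ : 0 ≤ x₂)
    (hy₂ : 0 ≤ y₂) :
    mixingEntropy x₁ y₁ + mixingEntropy x₂ y₂ ≤ mixingEntropy (x₁ + x₂) (y₁ + y₂) := by
  obtain hs₁ | hs₁ := (add_nonneg hx₁ hy₁).eq_or_lt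
  · obtain ⟨rfl, rfl⟩ : x₁ = 0 ∧ y₁ = 0 := ⟨by linarith, by linarith⟩
    simp [mixingEntropy]
  obtain hs₂ | hs₂ := (add_nonneg hx₂ hy₂).eq_or_lt
  · obtain ⟨rfl, rfl⟩ : x₂ = 0 ∧ y₂ = 0 := ⟨by linarith, by linarith⟩
    simp [mixingEntropy]
  have hS : x₁ + x₂ + (y₁ + y₂) = (x₁ + y₁) + (x₂ + y₂) := by ring
  rw [mixingEntropy_eq_mul_binEntropy, mixingEntropy_eq_mul_binEntropy,
    mixingEntropy_eq_mul_binEntropy, hS]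
  generalize hs₁' : x₁ + y₁ = s₁ at *
  generalize hs₂' : x₂ + y₂ = s₂ at *
  have hp₁ : x₁ / s₁ ∈ Icc (0 : ℝ) 1 := ⟨by positivity, by rw [div_le_one hs₁]; linarith⟩
  have hp₂ : x₂ / s₂ ∈ Icc (0 : ℝ) 1 := ⟨by positivity, by rw [div_le_one hs₂]; linarith⟩
  have hconc := strictConcave_binEntropy.concaveOn.2 hp₁ hp₂
    (by positivity : 0 ≤ s₁ / (s₁ + s₂)) (by positivity : 0 ≤ s₂ / (s₁ + s₂)) (by field_simp)
  have hmid : s₁ / (s₁ + s₂) * (x₁ / s₁) + s₂ / (s₁ + s₂) * (x₂ / s₂) = (x₁ + x₂) / (s₁ + s₂) := by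
    field_simp
  simp only [smul_eq_mul, hmid] at hconc
  calc s₁ * binEntropy (x₁ / s₁) + s₂ * binEntropy (x₂ / s₂)
      = (s₁ + s₂) * (s₁ / (s₁ + s₂) * binEntropy (x₁ / s₁)
          + s₂ / (s₁ + s₂) * binEntropy (x₂ / s₂)) := by field_simp
    _ ≤ (s₁ + s₂) * binEntropy ((x₁ + x₂) / (s₁ + s₂)) := by gcongr

-- In nats, for the joint distribution `[[a, b], [c, d]]`.
def mutualInfo (a b c d : ℝ) : ℝ :=
  negMulLog (a + b) + negMulLog (c + d) + negMulLog (a + c) + negMulLog (b + d)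
    - negMulLog a - negMulLog b - negMulLog c - negMulLog d

lemma mutualInfo_transpose (a b c d : ℝ) : mutualInfo a c b d = mutualInfo a b c d := by
  unfold mutualInfo; ring

lemma mutualInfo_swap (a b c d : ℝ) : mutualInfo b a d c = mutualInfo a b c d := by
  rw [mutualInfo, mutualInfo, add_comm b a, add_comm d c]; ring

lemma mutualInfo_eq_sub_mixingEntropy (a b c d : ℝ) :
    mutualInfo a b c d =
      negMulLog (a + b) + negMulLog (c + d) - mixingEntropy a c - mixingEntropy b d := by
  unfold mutualInfo mixingEntropy; ring

lemma mutualInfo_convexComb_le {θ θ' a₁ b₁ c₁ d₁ a₂ b₂ c₂ d₂ : ℝ} (hθ : 0 ≤ θ) (hθ' : 0 ≤ θ')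
    (hθθ' : θ + θ' = 1) (ha₁ : 0 ≤ a₁) (hb₁ : 0 ≤ b₁) (hc₁ : 0 ≤ c₁) (hd₁ : 0 ≤ d₁)
    (ha₂ : 0 ≤ a₂) (hb₂ : 0 ≤ b₂) (hc₂ : 0 ≤ c₂) (hd₂ : 0 ≤ d₂)
    (hrow₁ : a₁ + b₁ = a₂ + b₂) (hrow₂ : c₁ + d₁ = c₂ + d₂) :
    mutualInfo (θ * a₁ + θ' * a₂) (θ * b₁ + θ' * b₂) (θ * c₁ + θ' * c₂) (θ * d₁ + θ' * d₂) ≤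
      θ * mutualInfo a₁ b₁ c₁ d₁ + θ' * mutualInfo a₂ b₂ c₂ d₂ := by
  have hac := mixingEntropy_add_le (mul_nonneg hθ ha₁) (mul_nonneg hθ hc₁)
    (mul_nonneg hθ' ha₂) (mul_nonneg hθ' hc₂)
  have hbd := mixingEntropy_add_le (mul_nonneg hθ hb₁) (mul_nonneg hθ hd₁)
    (mul_nonneg hθ' hb₂) (mul_nonneg hθ' hd₂)
  simp only [mixingEntropy_mul_mul] at hac hbd
  have hp : θ * a₁ + θ' * a₂ + (θ * b₁ + θ' * b₂) = a₁ + b₁ := by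
    linear_combination θ' * hrow₁.symm + (a₁ + b₁) * hθθ'
  have hq : θ * c₁ + θ' * c₂ + (θ * d₁ + θ' * d₂) = c₁ + d₁ := by
    linear_combination θ' * hrow₂.symm + (c₁ + d₁) * hθθ'
  simp only [mutualInfo_eq_sub_mixingEntropy, hp, hq, ← hrow₁, ← hrow₂]
  linear_combination hac + hbd - (negMulLog (a₁ + b₁) + negMulLog (c₁ + d₁)) * hθθ'

-- `mutualInfo a 0 x d` with `a + x + d = 1`, `a d = K`: `a, d = (1 - x ∓ √((1 - x)² - 4K)) / 2`.
def zChannelMI (K x : ℝ) : ℝ :=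
  negMulLog ((1 + x - √((1 - x) ^ 2 - 4 * K)) / 2) +
    negMulLog ((1 + x + √((1 - x) ^ 2 - 4 * K)) / 2) - negMulLog x

lemma exists_hasDerivAt_zChannelMI_nonpos {K x : ℝ} (hK : 0 ≤ K) (hx₀ : 0 < x) (hx₁ : x ≤ 1)
    (hKx : 4 * K < (1 - x) ^ 2) : ∃ y ≤ 0, HasDerivAt (zChannelMI K) y x := by
  set g := √((1 - x) ^ 2 - 4 * K)
  have hg₀ : 0 < g := sqrt_pos.2 (by linarith)
  have hg_sq : g ^ 2 = (1 - x) ^ 2 - 4 * K := sq_sqrt (by linarith)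
  have hg₁ : g ≤ 1 - x := by nlinarith
  have hg' : HasDerivAt (fun s ↦ √((1 - s) ^ 2 - 4 * K)) (-(1 - x) / g) x := by
    have hr : HasDerivAt (fun s : ℝ ↦ (1 - s) ^ 2 - 4 * K) (-(2 * (1 - x))) x :=
      ((((hasDerivAt_id x).const_sub 1).fun_pow 2).sub_const (4 * K)).congr_deriv (by simp)
    convert hr.sqrt (by linarith) using 1
    rw [← show g = √((1 - x) ^ 2 - 4 * K) from rfl]
    field_simp
  have hu := (hasDerivAt_negMulLog (by linarith : (1 + x - g) / 2 ≠ 0)).comp x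
    ((((hasDerivAt_id x).const_add 1).sub hg').div_const 2)
  have hv := (hasDerivAt_negMulLog (by linarith : (1 + x + g) / 2 ≠ 0)).comp x
    ((((hasDerivAt_id x).const_add 1).add hg').div_const 2)
  refine ⟨_, ?_, (hu.add hv).sub (hasDerivAt_negMulLog hx₀.ne')⟩
  -- with `a, d = (1 - x ∓ g) / 2` the other two entries, the derivative is
  -- `(a * log (x + d) + (d - a) * log x - d * log (x + a)) / g`
  have hkey := mul_log_add_add_sub_mul_log_le hx₀ (by linarith : 0 ≤ (1 - x - g) / 2)
    (by linarith : (1 - x - g) / 2 ≤ (1 - x + g) / 2)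
  have e₁ : x + (1 - x + g) / 2 = (1 + x + g) / 2 := by ring
  have e₂ : x + (1 - x - g) / 2 = (1 + x - g) / 2 := by ring
  rw [e₁, e₂, ← sub_nonpos] at hkey
  refine le_of_eq_of_le ?_ (div_nonpos_of_nonpos_of_nonneg hkey hg₀.le)
  field_simp
  ring

lemma zChannelMI_antitoneOn {K c : ℝ} (hK : 0 ≤ K) (hc : c ≤ 1) (hKc : 4 * K ≤ (1 - c) ^ 2) :
    AntitoneOn (zChannelMI K) (Icc 0 c) := by
  have hderiv : ∀ x ∈ interior (Icc 0 c), ∃ y ≤ 0, HasDerivAt (zChannelMI K) y x := by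
    rw [interior_Icc]
    exact fun x hx ↦ exists_hasDerivAt_zChannelMI_nonpos hK hx.1 (hx.2.le.trans hc)
      (by nlinarith [hx.2])
  refine antitoneOn_of_deriv_nonpos (convex_Icc 0 c) ?_ ?_ ?_
  · exact Continuous.continuousOn (by unfold zChannelMI; fun_prop)
  · intro x hx
    obtain ⟨y, -, hy⟩ := hderiv x hx
    exact hy.differentiableAt.differentiableWithinAt
  · intro x hx
    obtain ⟨y, hy₀, hy⟩ := hderiv x hx
    exact hy.deriv ▸ hy₀

lemma zChannelMI_mul_eq_mutualInfo {a c d : ℝ} (hsum : a + c + d = 1) :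
    zChannelMI (a * d) c = mutualInfo a 0 c d := by
  have hrad : (1 - c) ^ 2 - 4 * (a * d) = (d - a) ^ 2 := by
    rw [show 1 - c = a + d by linarith]; ring
  rw [zChannelMI, hrad, sqrt_sq_eq_abs]
  rcases le_total a d with h | h
  · rw [abs_of_nonneg (sub_nonneg.2 h), show (1 + c - (d - a)) / 2 = a + c by linarith,
      show (1 + c + (d - a)) / 2 = c + d by linarith]
    simp only [mutualInfo, add_zero, zero_add, negMulLog_zero]; ring
  · rw [abs_of_nonpos (sub_nonpos.2 h), show (1 + c - -(d - a)) / 2 = c + d by linarith,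
      show (1 + c + -(d - a)) / 2 = a + c by linarith]
    simp only [mutualInfo, add_zero, zero_add, negMulLog_zero]; ring

lemma mutualInfo_zero_le_binEntropy {a c d t : ℝ} (ha : 0 ≤ a) (hc : 0 ≤ c) (hd : 0 ≤ d)
    (hsum : a + c + d = 1) (ht : t * (1 - t) = a * d) : mutualInfo a 0 c d ≤ binEntropy t :=
  calc mutualInfo a 0 c d
      = zChannelMI (a * d) c := (zChannelMI_mul_eq_mutualInfo hsum).symm
    _ ≤ zChannelMI (a * d) 0 := zChannelMI_antitoneOn (by positivity) (by linarith)
        (by nlinarith [sq_nonneg (a - d)]) ⟨le_rfl, hc⟩ ⟨hc, le_rfl⟩ hc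
    _ = mutualInfo t 0 0 (1 - t) := by rw [← ht, zChannelMI_mul_eq_mutualInfo (by ring)]
    _ = binEntropy t := by
        simp only [mutualInfo, binEntropy_eq_negMulLog_add_negMulLog_one_sub, add_zero, zero_add,
          negMulLog_zero]
        ring

lemma mutualInfo_le_binEntropy_of_pos {a b c d t : ℝ} (ha : 0 ≤ a) (hb : 0 < b) (hc : 0 < c)
    (hd : 0 ≤ d) (hsum : a + b + c + d = 1) (hbc : b * c ≤ a * d)
    (ht : t * (1 - t) = a * d - b * c) : mutualInfo a b c d ≤ binEntropy t := by
  -- The matrices with row marginals `p, q` and determinant `D` form a segment through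
  -- `(a, b, c, d)` with endpoints `(D / q, N / q, 0, q)` and `(p, 0, N / p, D / p)`.
  set p := a + b
  set q := c + d
  set D := a * d - b * c
  set N := b * q + c * p
  have hp : 0 < p := by positivity
  have hq : 0 < q := by positivity
  have hN : 0 < N := by positivity
  set θ := b * q / N
  set θ' := c * p / N
  have hθθ' : θ + θ' = 1 := by simp only [θ, θ']; field_simp; simp only [N]
  have key := mutualInfo_convexComb_le (a₁ := D / q) (b₁ := N / q) (c₁ := 0) (d₁ := q)
    (a₂ := p) (b₂ := 0) (c₂ := N / p) (d₂ := D / p) (by positivity) (by positivity) hθθ'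
    (by positivity) (by positivity) le_rfl hq.le hp.le le_rfl (by positivity) (by positivity)
    (by field_simp; linarith) (by field_simp; linarith)
  have ha' : θ * (D / q) + θ' * p = a := by
    simp only [θ, θ']; field_simp; simp only [N, D, p, q]; ring
  have hb' : θ * (N / q) + θ' * 0 = b := by simp only [θ, θ']; field_simp; ring
  have hc' : θ * 0 + θ' * (N / p) = c := by simp only [θ, θ']; field_simp; ring
  have hd' : θ * q + θ' * (D / p) = d := by
    simp only [θ, θ']; field_simp; simp only [N, D, p, q]; ring
  rw [ha', hb', hc', hd'] at key
  have h₁ : mutualInfo (D / q) (N / q) 0 q ≤ binEntropy t := by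
    rw [← mutualInfo_transpose]
    exact mutualInfo_zero_le_binEntropy (by positivity) (by positivity) hq.le
      (by field_simp; nlinarith) (by field_simp; exact ht)
  have h₂ : mutualInfo p 0 (N / p) (D / p) ≤ binEntropy t :=
    mutualInfo_zero_le_binEntropy hp.le (by positivity) (by positivity)
      (by field_simp; nlinarith) (by field_simp; exact ht)
  calc mutualInfo a b c d ≤ θ * binEntropy t + θ' * binEntropy t := key.trans (by gcongr)
    _ = binEntropy t := by rw [← add_mul, hθθ', one_mul]

lemma mutualInfo_le_binEntropy_of_mul_le_mul {a b c d t : ℝ} (ha : 0 ≤ a) (hb : 0 ≤ b)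
    (hc : 0 ≤ c) (hd : 0 ≤ d) (hsum : a + b + c + d = 1) (hbc : b * c ≤ a * d)
    (ht : t * (1 - t) = a * d - b * c) : mutualInfo a b c d ≤ binEntropy t := by
  obtain rfl | hb := hb.eq_or_lt
  · exact mutualInfo_zero_le_binEntropy ha hc hd (by linarith) (by linarith)
  obtain rfl | hc := hc.eq_or_lt
  · rw [← mutualInfo_transpose]
    exact mutualInfo_zero_le_binEntropy ha hb.le hd (by linarith) (by linarith)
  exact mutualInfo_le_binEntropy_of_pos ha hb hc hd hsum hbc ht

theorem mutualInfo_le_binEntropy {a b c d t : ℝ} (ha : 0 ≤ a) (hb : 0 ≤ b) (hc : 0 ≤ c)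
    (hd : 0 ≤ d) (hsum : a + b + c + d = 1) (ht : t * (1 - t) = |a * d - b * c|) :
    mutualInfo a b c d ≤ binEntropy t := by
  rcases le_total (b * c) (a * d) with h | h
  · exact mutualInfo_le_binEntropy_of_mul_le_mul ha hb hc hd hsum h
      (by rw [ht, abs_of_nonneg (sub_nonneg.2 h)])
  · rw [← mutualInfo_swap]
    exact mutualInfo_le_binEntropy_of_mul_le_mul hb ha hd hc (by linarith) h
      (by rw [ht, abs_of_nonpos (sub_nonpos.2 h)]; ring)

lemma abs_mul_sub_mul_le_quarter {a b c d : ℝ} (ha : 0 ≤ a) (hb : 0 ≤ b) (hc : 0 ≤ c)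
    (hd : 0 ≤ d) (hsum : a + b + c + d = 1) : |a * d - b * c| ≤ 1 / 4 := by
  rw [abs_le]
  constructor <;> nlinarith [sq_nonneg (a - d), sq_nonneg (b - c), mul_nonneg ha hd,
    mul_nonneg hb hc]

lemma MI_eq_mutualInfo_div_log_two (lam : Fin 2 → Fin 2 → ℝ) :
    MI lam = mutualInfo (lam 0 0) (lam 0 1) (lam 1 0) (lam 1 1) / log 2 := by
  simp only [MI, mu, nu, mutualInfo, Fin.sum_univ_two, logb, negMulLog]
  ring

lemma eta_eq_four_mul (lam : Fin 2 → Fin 2 → ℝ) (hsum : ∑ i, ∑ j, lam i j = 1) :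
    eta lam = 4 * (lam 0 0 * lam 1 1 - lam 0 1 * lam 1 0) := by
  simp only [Fin.sum_univ_two] at hsum
  simp only [eta, mu, nu, z, Fin.sum_univ_two, Matrix.cons_val_zero, Matrix.cons_val_one]
  linear_combination (lam 0 1 + lam 1 0 - lam 0 0 - lam 1 1) * hsum

lemma neg_mul_logb_sub_mul_logb_eq_binEntropy_div (s : ℝ) :
    -((1 + s) / 2) * logb 2 ((1 + s) / 2) - (1 - s) / 2 * logb 2 ((1 - s) / 2) =
      binEntropy ((1 - s) / 2) / log 2 := by
  rw [binEntropy_eq_negMulLog_add_negMulLog_one_sub, show 1 - (1 - s) / 2 = (1 + s) / 2 by ring]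
  simp only [logb, negMulLog]
  ring

/-- Theorem 2, upper bound UB with `s = √(1 - |η|)`:
`I ≤ 𝓛((1+s)/2) + 𝓛((1-s)/2)`. -/
theorem mutual_information_upper_bound (lam : Fin 2 → Fin 2 → ℝ)
    (hpos : ∀ i j, 0 ≤ lam i j) (hsum : ∑ i, ∑ j, lam i j = 1) :
    MI lam ≤
      -((1 + Real.sqrt (1 - |eta lam|)) / 2) *
          Real.logb 2 ((1 + Real.sqrt (1 - |eta lam|)) / 2) -
        ((1 - Real.sqrt (1 - |eta lam|)) / 2) *
          Real.logb 2 ((1 - Real.sqrt (1 - |eta lam|)) / 2) := by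
  have hsum' : lam 0 0 + lam 0 1 + lam 1 0 + lam 1 1 = 1 := by
    simpa only [Fin.sum_univ_two, add_assoc] using hsum
  have hD := abs_mul_sub_mul_le_quarter (hpos 0 0) (hpos 0 1) (hpos 1 0) (hpos 1 1) hsum'
  have hη : |eta lam| = 4 * |lam 0 0 * lam 1 1 - lam 0 1 * lam 1 0| := by
    rw [eta_eq_four_mul lam hsum, abs_mul, abs_of_pos four_pos]
  have hs : √(1 - |eta lam|) ^ 2 = 1 - 4 * |lam 0 0 * lam 1 1 - lam 0 1 * lam 1 0| := by
    rw [sq_sqrt (by linarith), hη]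
  rw [MI_eq_mutualInfo_div_log_two, neg_mul_logb_sub_mul_logb_eq_binEntropy_div]
  gcongr
  exact mutualInfo_le_binEntropy (hpos 0 0) (hpos 0 1) (hpos 1 0) (hpos 1 1) hsum'
    (by linear_combination -hs / 4)

end
end

section
/- For every η ∈ ℝ with |η| ≤ 1, 2 + ((1 + η)/2)·Real.logb 2 ((1 + η)/4) + ((1 − η)/2)·Real.logb 2 ((1 − η)/4) ≥ η² / (2·Real.log 2). -/
/-!
In nats the left-hand side equals `φ(η) / (2 ln 2)` with
`φ(x) = (1 + x) ln (1 + x) + (1 - x) ln (1 - x)`, twice the divergence of `Bernoulli((1 + x)/2)`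
from the fair coin, so the claim is `x² ≤ φ(x)` on `[-1, 1]`. Both sides are even and agree at `0`,
and for `0 ≤ x < 1` the derivative of `φ(x) - x²` is `ln (1 + x) - ln (1 - x) - 2x ≥ 0`, because
every term of the series `ln (1 + x) - ln (1 - x) = ∑ 2 x^(2k+1) / (2k+1)` is nonnegative.
-/

open Real Set

lemma two_mul_le_log_one_add_sub_log_one_sub {x : ℝ} (hx₀ : 0 ≤ x) (hx₁ : x < 1) :
    2 * x ≤ log (1 + x) - log (1 - x) := by
  have hsum := hasSum_log_sub_log_of_abs_lt_one (abs_lt.mpr ⟨by linarith, hx₁⟩)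
  simpa using le_hasSum hsum 0 fun k _ ↦ by positivity

lemma hasDerivAt_mul_log_one_add_add_mul_log_one_sub {x : ℝ} (hx_add : 1 + x ≠ 0)
    (hx_sub : 1 - x ≠ 0) :
    HasDerivAt (fun y ↦ (1 + y) * log (1 + y) + (1 - y) * log (1 - y))
      (log (1 + x) - log (1 - x)) x := by
  have hplus := (hasDerivAt_mul_log hx_add).comp x ((hasDerivAt_id x).const_add 1)
  have hminus := (hasDerivAt_mul_log hx_sub).comp x ((hasDerivAt_id x).const_sub 1)
  exact (hplus.add hminus).congr_deriv (by ring)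

lemma sq_le_mul_log_one_add_add_mul_log_one_sub_of_nonneg {x : ℝ} (hx₀ : 0 ≤ x) (hx₁ : x ≤ 1) :
    x ^ 2 ≤ (1 + x) * log (1 + x) + (1 - x) * log (1 - x) := by
  have hmono : MonotoneOn (fun y ↦ (1 + y) * log (1 + y) + (1 - y) * log (1 - y) - y ^ 2)
      (Icc 0 1) := by
    refine monotoneOn_of_hasDerivWithinAt_nonneg (f' := fun y ↦ log (1 + y) - log (1 - y) - 2 * y)
      (convex_Icc 0 1) (by fun_prop) (fun y hy ↦ ?_) (fun y hy ↦ ?_)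
    all_goals rw [interior_Icc] at hy
    · have hderiv := hasDerivAt_mul_log_one_add_add_mul_log_one_sub
        (by linarith [hy.1] : 0 < 1 + y).ne' (by linarith [hy.2] : 0 < 1 - y).ne'
      exact ((hderiv.sub (hasDerivAt_pow 2 y)).congr_deriv (by ring)).hasDerivWithinAt
    · linarith [two_mul_le_log_one_add_sub_log_one_sub hy.1.le hy.2]
  simpa using hmono (left_mem_Icc.mpr zero_le_one) ⟨hx₀, hx₁⟩ hx₀

lemma sq_le_mul_log_one_add_add_mul_log_one_sub {x : ℝ} (hx : |x| ≤ 1) :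
    x ^ 2 ≤ (1 + x) * log (1 + x) + (1 - x) * log (1 - x) := by
  rcases le_total 0 x with hx₀ | hx₀
  · exact sq_le_mul_log_one_add_add_mul_log_one_sub_of_nonneg hx₀ (abs_le.mp hx).2
  · have hneg := sq_le_mul_log_one_add_add_mul_log_one_sub_of_nonneg (neg_nonneg.mpr hx₀)
      (by linarith [(abs_le.mp hx).1])
    rw [neg_sq, ← sub_eq_add_neg, sub_neg_eq_add] at hneg
    linarith

lemma mul_log_div_of_ne_zero (x : ℝ) {y : ℝ} (hy : y ≠ 0) :
    x * log (x / y) = x * log x - x * log y := by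
  rcases eq_or_ne x 0 with rfl | hx
  · simp
  · rw [log_div hx hy, mul_sub]

lemma two_add_mul_logb_add_mul_logb (η : ℝ) :
    2 + ((1 + η) / 2) * logb 2 ((1 + η) / 4) + ((1 - η) / 2) * logb 2 ((1 - η) / 4) =
      ((1 + η) * log (1 + η) + (1 - η) * log (1 - η)) / (2 * log 2) := by
  have hlog4 : log 4 = 2 * log 2 := by
    rw [show (4 : ℝ) = 2 ^ 2 by norm_num, log_pow, Nat.cast_ofNat]
  have hplus := mul_log_div_of_ne_zero (1 + η) four_ne_zero
  have hminus := mul_log_div_of_ne_zero (1 - η) four_ne_zero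
  have hlog2 : log 2 ≠ 0 := (log_pos one_lt_two).ne'
  simp only [logb]
  field_simp
  linear_combination hplus + hminus - 2 * hlog4

/-- The paper's lower bound `LB = 2 - 2𝓛((1+η)/4) - 2𝓛((1-η)/4)` (bits) dominates
the conventional bound `η²/2` (nats), i.e. `η²/(2 ln 2)` in bits. -/
theorem LB_stricter_than_conventional :
    ∀ η : ℝ, |η| ≤ 1 →
      2 + ((1 + η) / 2) * Real.logb 2 ((1 + η) / 4) +
          ((1 - η) / 2) * Real.logb 2 ((1 - η) / 4) ≥
        η ^ 2 / (2 * Real.log 2) := by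
  intro η hη
  rw [ge_iff_le, two_add_mul_logb_add_mul_logb]
  have hlog2 : 0 < log 2 := log_pos one_lt_two
  gcongr
  exact sq_le_mul_log_one_add_add_mul_log_one_sub hη
end
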